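/- Let u(x) = χ_{[0,∞)}(x)·φ(x)/√(−ln(x/2)) as above and define J₂(ε) := −∫_{2ε}^{1+ε} u(y)/|ε − y| dy. Then J₂(ε) = 2√(ln 2) − 2√(−ln ε) + o(1) as ε → 0⁺, i.e. lim_{ε→0⁺} (J₂(ε) − 2√(ln 2) + 2√(−ln ε)) = 0. -/

import Mathlib

open Real Filter Set intervalIntegral Topology

private lemma my_sqrt_atTop : Tendsto Real.sqrt atTop atTop := by
  rw [Filter.tendsto_atTop_atTop]
  intro b
  refine ⟨max 0 (b ^ 2), fun a ha => ?_⟩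
  rcases le_or_gt b 0 with hb | hb
  · exact hb.trans (Real.sqrt_nonneg a)
  · have h1 : b ^ 2 ≤ a := le_trans (le_max_right _ _) ha
    have := Real.sqrt_le_sqrt h1
    rwa [Real.sqrt_sq hb.le] at this

private lemma my_contOn {ε a b : ℝ} (hεa : ε < a) (h0a : 0 < a) (hb2 : b < 2) :
    ContinuousOn (fun y => 1 / ((y - ε) * Real.sqrt (Real.log 2 - Real.log y)))
      (Set.Icc a b) := by
  apply ContinuousOn.div continuousOn_const
  · exact ((continuousOn_id.sub continuousOn_const).mul
      ((continuousOn_const.sub ((Real.continuousOn_log).mono (fun y hy => by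
        have : 0 < y := lt_of_lt_of_le h0a hy.1
        simp [this.ne']))).sqrt))
  · intro y hy
    have hy0 : 0 < y := lt_of_lt_of_le h0a hy.1
    have hyε : 0 < y - ε := by have := hy.1; simp only [Set.mem_Icc] at hy; linarith [hy.1]
    have ht : 0 < Real.log 2 - Real.log y :=
      sub_pos.2 (Real.log_lt_log hy0 (lt_of_le_of_lt hy.2 hb2))
    positivity

private lemma my_contOn2 {a b : ℝ} (h0a : 0 < a) (hb2 : b < 2) :
    ContinuousOn (fun y => 1 / (y * Real.sqrt (Real.log 2 - Real.log y)))
      (Set.Icc a b) := by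
  have := my_contOn (ε := 0) h0a h0a hb2
  simpa using this

private lemma my_contOnG {ε a b : ℝ} (hεa : ε < a) (h0a : 0 < a) :
    ContinuousOn (fun y => 1 / (y - ε) - 1 / y) (Set.Icc a b) := by
  apply ContinuousOn.sub
  · apply ContinuousOn.div continuousOn_const (continuousOn_id.sub continuousOn_const)
    intro y hy
    have := hy.1
    simp only [Set.mem_Icc] at hy
    have : ε < y := lt_of_lt_of_le hεa hy.1
    intro h; rw [Pi.sub_apply, sub_eq_zero] at h; exact absurd h.symm this.ne
  · apply ContinuousOn.div continuousOn_const continuousOn_id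
    intro y hy
    exact (lt_of_lt_of_le h0a hy.1).ne'

private lemma my_ftc1 {a b : ℝ} (h0a : 0 < a) (hb2 : b < 2) (hab : a ≤ b) :
    ∫ y in a..b, 1 / (y * Real.sqrt (Real.log 2 - Real.log y)) =
      2 * Real.sqrt (Real.log 2 - Real.log a) - 2 * Real.sqrt (Real.log 2 - Real.log b) := by
  have key : ∀ y ∈ Set.uIcc a b,
      HasDerivAt (fun y => -2 * Real.sqrt (Real.log 2 - Real.log y))
        (1 / (y * Real.sqrt (Real.log 2 - Real.log y))) y := by
    intro y hy
    rw [Set.uIcc_of_le hab] at hy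
    have hy0 : 0 < y := lt_of_lt_of_le h0a hy.1
    have hy2 : y < 2 := lt_of_le_of_lt hy.2 hb2
    have ht : 0 < Real.log 2 - Real.log y := sub_pos.2 (Real.log_lt_log hy0 hy2)
    have hlog : HasDerivAt (fun y : ℝ => Real.log 2 - Real.log y) (0 - y⁻¹) y :=
      (hasDerivAt_const _ _).sub (Real.hasDerivAt_log hy0.ne')
    have hs := (Real.hasDerivAt_sqrt ht.ne').comp y hlog
    have h2 := hs.const_mul (-2 : ℝ)
    refine h2.congr_deriv ?_
    have hst : Real.sqrt (Real.log 2 - Real.log y) ≠ 0 := (Real.sqrt_pos.2 ht).ne'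
    field_simp
    ring
  rw [intervalIntegral.integral_eq_sub_of_hasDerivAt key
    (((my_contOn2 h0a hb2).mono (by rw [Set.uIcc_of_le hab])).intervalIntegrable)]
  ring

private lemma my_ftcG {ε a b : ℝ} (hεa : ε < a) (h0a : 0 < a) (hab : a ≤ b) :
    ∫ y in a..b, (1 / (y - ε) - 1 / y) =
      (Real.log (b - ε) - Real.log b) - (Real.log (a - ε) - Real.log a) := by
  have key : ∀ y ∈ Set.uIcc a b,
      HasDerivAt (fun y => Real.log (y - ε) - Real.log y) (1 / (y - ε) - 1 / y) y := by
    intro y hy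
    rw [Set.uIcc_of_le hab] at hy
    have hy0 : 0 < y := lt_of_lt_of_le h0a hy.1
    have hyε : 0 < y - ε := sub_pos.2 (lt_of_lt_of_le hεa hy.1)
    have h1 : HasDerivAt (fun y : ℝ => Real.log (y - ε)) ((y - ε)⁻¹ * 1) y :=
      by have := (Real.hasDerivAt_log hyε.ne').comp y ((hasDerivAt_id y).sub_const ε); exact this
    have := h1.sub (Real.hasDerivAt_log hy0.ne')
    exact this.congr_deriv (by simp [one_div])
  rw [intervalIntegral.integral_eq_sub_of_hasDerivAt key
    (((my_contOnG hεa h0a).mono (by rw [Set.uIcc_of_le hab])).intervalIntegrable)]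

theorem stmt_9 (ζ : ℝ) (hζ0 : 0 < ζ) (hζ1 : ζ < 1 / 4)
    (φ : ℝ → ℝ) (hφs : ContDiff ℝ (⊤ : ℕ∞) φ) (hφc : HasCompactSupport φ)
    (hφe : ∀ x, φ (-x) = φ x)
    (hφ1 : ∀ x ∈ Set.Ioo (-1 - ζ) (1 + ζ), φ x = 1)
    (hφ0 : ∀ x, x ∉ Set.Ioo (-1 - 2 * ζ) (1 + 2 * ζ) → φ x = 0)
    (hφb : ∀ x, 0 ≤ φ x ∧ φ x ≤ 1)
    (u : ℝ → ℝ)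
    (hu : ∀ x, u x = if 0 < x then φ x / Real.sqrt (Real.log 2 - Real.log x) else 0) :
    Filter.Tendsto
      (fun ε : ℝ =>
        (-∫ y in (2 * ε)..(1 + ε), u y / |ε - y|)
          - 2 * Real.sqrt (Real.log 2) + 2 * Real.sqrt (-Real.log ε))
      (nhdsWithin 0 (Set.Ioi 0)) (nhds 0) := by
  have hln2 : 0 < Real.log 2 := Real.log_pos (by norm_num)
  set δ : ℝ := min ζ (1/16) with hδdef
  have hδ0 : 0 < δ := lt_min hζ0 (by norm_num)
  set A : ℝ → ℝ := fun ε =>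
    2 * Real.sqrt (Real.log 2 - Real.log (1 + ε)) - 2 * Real.sqrt (Real.log 2) with hAdef
  set D : ℝ → ℝ := fun ε => ∫ y in (2*ε)..(1+ε),
    (1 / ((y - ε) * Real.sqrt (Real.log 2 - Real.log y))
      - 1 / (y * Real.sqrt (Real.log 2 - Real.log y))) with hDdef
  set B : ℝ → ℝ := fun ε =>
    (Real.log 2 + Real.log (1 - Real.sqrt ε)) / Real.sqrt (Real.log 2 - Real.log ε / 2)
    + (- Real.log (1 + ε) - Real.log (1 - Real.sqrt ε))
        / Real.sqrt (Real.log 2 - Real.log (1 + ε)) with hBdef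
  -- basic facts for ε ∈ Ioo 0 δ
  have facts : ∀ ε ∈ Set.Ioo (0:ℝ) δ,
      0 < ε ∧ ε < ζ ∧ ε < 1/16 ∧ 2*ε ≤ Real.sqrt ε ∧ Real.sqrt ε < 1/2
        ∧ Real.sqrt ε ≤ 1 + ε ∧ ε < Real.sqrt ε := by
    intro ε hε
    have hε0 : 0 < ε := hε.1
    have hεζ : ε < ζ := lt_of_lt_of_le hε.2 (min_le_left _ _)
    have hε16 : ε < 1/16 := lt_of_lt_of_le hε.2 (min_le_right _ _)
    have hs0 : 0 ≤ Real.sqrt ε := Real.sqrt_nonneg ε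
    have hss : Real.sqrt ε * Real.sqrt ε = ε := Real.mul_self_sqrt hε0.le
    have hs14 : Real.sqrt ε < 1/2 := by nlinarith
    refine ⟨hε0, hεζ, hε16, by nlinarith, hs14, by nlinarith, by nlinarith⟩
  -- key equality
  have key : ∀ ε ∈ Set.Ioo (0:ℝ) δ,
      (-∫ y in (2*ε)..(1+ε), u y / |ε - y|)
        - 2 * Real.sqrt (Real.log 2) + 2 * Real.sqrt (-Real.log ε) = A ε - D ε := by
    intro ε hε
    obtain ⟨hε0, hεζ, hε16, h2s, hs12, hs1ε, hεs⟩ := facts ε hε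
    have hab : 2*ε ≤ 1+ε := by linarith
    have h1ε2 : 1 + ε < 2 := by linarith
    have h2ε0 : 0 < 2*ε := by linarith
    have hrw : (∫ y in (2*ε)..(1+ε), u y / |ε - y|)
        = ∫ y in (2*ε)..(1+ε), 1 / ((y - ε) * Real.sqrt (Real.log 2 - Real.log y)) := by
      apply intervalIntegral.integral_congr
      intro y hy
      rw [Set.uIcc_of_le hab] at hy
      obtain ⟨hy1, hy2⟩ := hy
      have hy0 : 0 < y := by linarith
      have hφy : φ y = 1 := hφ1 y ⟨by linarith, by linarith⟩
      show u y / |ε - y| = 1 / ((y - ε) * Real.sqrt (Real.log 2 - Real.log y))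
      rw [hu y, if_pos hy0, hφy, abs_of_neg (by linarith : ε - y < 0)]
      rw [neg_sub, div_div, mul_comm]
    have hIsub : D ε = (∫ y in (2*ε)..(1+ε),
          1 / ((y - ε) * Real.sqrt (Real.log 2 - Real.log y)))
        - ∫ y in (2*ε)..(1+ε), 1 / (y * Real.sqrt (Real.log 2 - Real.log y)) := by
      rw [hDdef]
      exact intervalIntegral.integral_sub
        (((my_contOn (by linarith) h2ε0 h1ε2).mono
          (by rw [Set.uIcc_of_le hab])).intervalIntegrable)
        (((my_contOn2 h2ε0 h1ε2).mono (by rw [Set.uIcc_of_le hab])).intervalIntegrable)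
    have hI : (∫ y in (2*ε)..(1+ε), 1 / (y * Real.sqrt (Real.log 2 - Real.log y)))
        = 2 * Real.sqrt (-Real.log ε) - 2 * Real.sqrt (Real.log 2 - Real.log (1+ε)) := by
      rw [my_ftc1 h2ε0 h1ε2 hab]
      have : Real.log (2*ε) = Real.log 2 + Real.log ε :=
        Real.log_mul (by norm_num) hε0.ne'
      rw [this]
      ring_nf
    rw [hrw] at *
    rw [hAdef]
    have := hIsub
    rw [hI] at this
    linarith [this]
  -- D nonneg
  have hD0 : ∀ ε ∈ Set.Ioo (0:ℝ) δ, 0 ≤ D ε := by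
    intro ε hε
    obtain ⟨hε0, hεζ, hε16, h2s, hs12, hs1ε, hεs⟩ := facts ε hε
    have hab : 2*ε ≤ 1+ε := by linarith
    apply intervalIntegral.integral_nonneg hab
    intro y hy
    obtain ⟨hy1, hy2⟩ := hy
    have hy0 : 0 < y := by linarith
    have ht : 0 < Real.log 2 - Real.log y :=
      sub_pos.2 (Real.log_lt_log hy0 (by linarith))
    have hst : 0 < Real.sqrt (Real.log 2 - Real.log y) := Real.sqrt_pos.2 ht
    have h1 : 0 < (y - ε) * Real.sqrt (Real.log 2 - Real.log y) := by
      apply mul_pos (by linarith) hst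
    have h2 : (y - ε) * Real.sqrt (Real.log 2 - Real.log y)
        ≤ y * Real.sqrt (Real.log 2 - Real.log y) := by nlinarith
    have := one_div_le_one_div_of_le h1 h2
    linarith
  -- D ≤ B
  have hDB : ∀ ε ∈ Set.Ioo (0:ℝ) δ, D ε ≤ B ε := by
    intro ε hε
    obtain ⟨hε0, hεζ, hε16, h2s, hs12, hs1ε, hεs⟩ := facts ε hε
    have hs0 : 0 < Real.sqrt ε := Real.sqrt_pos.2 hε0
    have hss : Real.sqrt ε * Real.sqrt ε = ε := Real.mul_self_sqrt hε0.le
    have h1ε2 : 1 + ε < 2 := by linarith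
    have hsε2 : Real.sqrt ε < 2 := by linarith
    have h2ε0 : 0 < 2*ε := by linarith
    -- splitting
    have hint1 : IntervalIntegrable (fun y =>
        1 / ((y - ε) * Real.sqrt (Real.log 2 - Real.log y))
          - 1 / (y * Real.sqrt (Real.log 2 - Real.log y))) MeasureTheory.volume
        (2*ε) (Real.sqrt ε) :=
      (((my_contOn (by linarith) h2ε0 hsε2).sub (my_contOn2 h2ε0 hsε2)).mono
        (by rw [Set.uIcc_of_le h2s])).intervalIntegrable
    have hint2 : IntervalIntegrable (fun y =>
        1 / ((y - ε) * Real.sqrt (Real.log 2 - Real.log y))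
          - 1 / (y * Real.sqrt (Real.log 2 - Real.log y))) MeasureTheory.volume
        (Real.sqrt ε) (1+ε) :=
      (((my_contOn (by linarith) hs0 h1ε2).sub (my_contOn2 hs0 h1ε2)).mono
        (by rw [Set.uIcc_of_le hs1ε])).intervalIntegrable
    have hsplit : D ε = (∫ y in (2*ε)..(Real.sqrt ε),
          (1 / ((y - ε) * Real.sqrt (Real.log 2 - Real.log y))
            - 1 / (y * Real.sqrt (Real.log 2 - Real.log y))))
        + ∫ y in (Real.sqrt ε)..(1+ε),
          (1 / ((y - ε) * Real.sqrt (Real.log 2 - Real.log y))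
            - 1 / (y * Real.sqrt (Real.log 2 - Real.log y))) := by
      rw [hDdef]
      exact (intervalIntegral.integral_add_adjacent_intervals hint1 hint2).symm
    -- generic bound on a subinterval
    have bound : ∀ a b c : ℝ, ε < a → 0 < a → b < 2 → a ≤ b → b ≤ c → c < 2 →
        (∫ y in a..b, (1 / ((y - ε) * Real.sqrt (Real.log 2 - Real.log y))
            - 1 / (y * Real.sqrt (Real.log 2 - Real.log y))))
          ≤ (1 / Real.sqrt (Real.log 2 - Real.log b)) *
              ((Real.log (b - ε) - Real.log b) - (Real.log (a - ε) - Real.log a)) := by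
      intro a b c hεa h0a hb2 hab hbc hc2
      have hb0 : 0 < b := lt_of_lt_of_le h0a hab
      have htb : 0 < Real.log 2 - Real.log b := sub_pos.2 (Real.log_lt_log hb0 hb2)
      have hstb : 0 < Real.sqrt (Real.log 2 - Real.log b) := Real.sqrt_pos.2 htb
      have hmono : (∫ y in a..b, (1 / ((y - ε) * Real.sqrt (Real.log 2 - Real.log y))
            - 1 / (y * Real.sqrt (Real.log 2 - Real.log y))))
          ≤ ∫ y in a..b, (1 / Real.sqrt (Real.log 2 - Real.log b)) *
              (1 / (y - ε) - 1 / y) := by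
        apply intervalIntegral.integral_mono_on hab
        · exact (((my_contOn hεa h0a hb2).sub (my_contOn2 h0a hb2)).mono
            (by rw [Set.uIcc_of_le hab])).intervalIntegrable
        · exact ((continuousOn_const.mul (my_contOnG hεa h0a)).mono
            (by rw [Set.uIcc_of_le hab])).intervalIntegrable
        · intro y hy
          obtain ⟨hy1, hy2⟩ := hy
          have hy0 : 0 < y := lt_of_lt_of_le h0a hy1
          have hyε : 0 < y - ε := by linarith [lt_of_lt_of_le hεa hy1]
          have hty : 0 < Real.log 2 - Real.log y :=
            sub_pos.2 (Real.log_lt_log hy0 (lt_of_le_of_lt hy2 hb2))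
          have hsty : 0 < Real.sqrt (Real.log 2 - Real.log y) := Real.sqrt_pos.2 hty
          have hord : Real.sqrt (Real.log 2 - Real.log b)
              ≤ Real.sqrt (Real.log 2 - Real.log y) := by
            apply Real.sqrt_le_sqrt
            have := Real.log_le_log hy0 hy2
            linarith
          have hdiff : 0 ≤ 1 / (y - ε) - 1 / y := by
            have h2 : y - ε ≤ y := by linarith
            have := one_div_le_one_div_of_le hyε h2
            linarith
          have heq : 1 / ((y - ε) * Real.sqrt (Real.log 2 - Real.log y))
              - 1 / (y * Real.sqrt (Real.log 2 - Real.log y))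
              = (1 / Real.sqrt (Real.log 2 - Real.log y)) * (1 / (y - ε) - 1 / y) := by
            field_simp
          rw [heq]
          apply mul_le_mul_of_nonneg_right _ hdiff
          exact one_div_le_one_div_of_le hstb hord
      calc _ ≤ _ := hmono
        _ = _ := by rw [intervalIntegral.integral_const_mul, my_ftcG hεa h0a hab]
    have hB1 := bound (2*ε) (Real.sqrt ε) (Real.sqrt ε) (by linarith) h2ε0 hsε2 h2s
      le_rfl hsε2
    have hB2 := bound (Real.sqrt ε) (1+ε) (1+ε) hεs hs0 h1ε2 hs1ε le_rfl h1ε2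
    -- simplify logs
    have hlogsub : Real.log (Real.sqrt ε - ε) - Real.log (Real.sqrt ε)
        = Real.log (1 - Real.sqrt ε) := by
      have h1 : Real.sqrt ε - ε = Real.sqrt ε * (1 - Real.sqrt ε) := by
        rw [mul_sub, mul_one, hss]
      rw [h1, Real.log_mul hs0.ne' (by linarith : (1:ℝ) - Real.sqrt ε ≠ 0)]
      ring
    have hlog2ε : Real.log (2*ε - ε) - Real.log (2*ε) = - Real.log 2 := by
      have h1 : 2*ε - ε = ε := by ring
      rw [h1, Real.log_mul (by norm_num) hε0.ne']
      ring
    have hlog1ε : Real.log (1 + ε - ε) = 0 := by norm_num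
    have hlogsq : Real.log (Real.sqrt ε) = Real.log ε / 2 := Real.log_sqrt hε0.le
    rw [hlogsub, hlog2ε] at hB1
    rw [hlog1ε, hlogsub] at hB2
    rw [hsplit, hBdef]
    rw [hlogsq] at hB1
    have e1 : (1 / Real.sqrt (Real.log 2 - Real.log ε / 2)) *
        (Real.log (1 - Real.sqrt ε) - -Real.log 2)
        = (Real.log 2 + Real.log (1 - Real.sqrt ε)) /
            Real.sqrt (Real.log 2 - Real.log ε / 2) := by ring
    have e2 : (1 / Real.sqrt (Real.log 2 - Real.log (1+ε))) *
        ((0 - Real.log (1+ε)) - Real.log (1 - Real.sqrt ε))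
        = (- Real.log (1 + ε) - Real.log (1 - Real.sqrt ε)) /
            Real.sqrt (Real.log 2 - Real.log (1 + ε)) := by ring
    rw [e1] at hB1
    rw [e2] at hB2
    exact add_le_add hB1 hB2
  -- tendsto A
  have hsqrt1 : Tendsto (fun ε : ℝ => 1 - Real.sqrt ε) (𝓝[>] 0) (𝓝 1) := by
    have hc : Continuous (fun ε : ℝ => 1 - Real.sqrt ε) :=
      continuous_const.sub Real.continuous_sqrt
    have : Tendsto (fun ε : ℝ => 1 - Real.sqrt ε) (𝓝 0) (𝓝 1) := by
      have := hc.tendsto 0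
      simpa using this
    exact this.mono_left nhdsWithin_le_nhds
  have h1pε : Tendsto (fun ε : ℝ => 1 + ε) (𝓝[>] 0) (𝓝 1) := by
    have hc : Continuous (fun ε : ℝ => 1 + ε) := continuous_const.add continuous_id
    have : Tendsto (fun ε : ℝ => 1 + ε) (𝓝 0) (𝓝 1) := by
      have := hc.tendsto 0
      simpa using this
    exact this.mono_left nhdsWithin_le_nhds
  have hlog1pε : Tendsto (fun ε : ℝ => Real.log (1 + ε)) (𝓝[>] 0) (𝓝 0) := by
    have := (Real.continuousAt_log (by norm_num : (1:ℝ) ≠ 0)).tendsto.comp h1pε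
    simpa [Function.comp_def] using this
  have hlog1mε : Tendsto (fun ε : ℝ => Real.log (1 - Real.sqrt ε)) (𝓝[>] 0) (𝓝 0) := by
    have := (Real.continuousAt_log (by norm_num : (1:ℝ) ≠ 0)).tendsto.comp hsqrt1
    simpa [Function.comp_def] using this
  have hA : Tendsto A (𝓝[>] 0) (𝓝 0) := by
    rw [hAdef]
    have h1 : Tendsto (fun ε : ℝ => Real.log 2 - Real.log (1 + ε)) (𝓝[>] 0)
        (𝓝 (Real.log 2)) := by
      have := tendsto_const_nhds (α := ℝ) (x := Real.log 2) (f := 𝓝[>] (0:ℝ))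
      simpa using this.sub hlog1pε
    have := ((h1.sqrt).const_mul 2).sub (tendsto_const_nhds
      (x := 2 * Real.sqrt (Real.log 2)))
    simpa using this
  -- tendsto B
  have hB : Tendsto B (𝓝[>] 0) (𝓝 0) := by
    rw [hBdef]
    have hterm1 : Tendsto (fun ε : ℝ => (Real.log 2 + Real.log (1 - Real.sqrt ε)) /
        Real.sqrt (Real.log 2 - Real.log ε / 2)) (𝓝[>] 0) (𝓝 0) := by
      apply Filter.Tendsto.div_atTop
      · have := (tendsto_const_nhds (α := ℝ) (x := Real.log 2)
          (f := 𝓝[>] (0:ℝ))).add hlog1mε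
        simpa using this
      · apply my_sqrt_atTop.comp
        have h1 : Tendsto (fun ε : ℝ => Real.log ε / 2) (𝓝[>] 0) atBot := by
          exact (Real.tendsto_log_nhdsGT_zero).atBot_div_const (by norm_num)
        have h2 : Tendsto (fun ε : ℝ => - (Real.log ε / 2)) (𝓝[>] 0) atTop :=
          tendsto_neg_atBot_atTop.comp h1
        have := tendsto_atTop_add_const_left (𝓝[>] (0:ℝ)) (Real.log 2) h2
        refine this.congr (fun ε => by ring)
    have hterm2 : Tendsto (fun ε : ℝ => (- Real.log (1 + ε) - Real.log (1 - Real.sqrt ε)) /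
        Real.sqrt (Real.log 2 - Real.log (1 + ε))) (𝓝[>] 0) (𝓝 0) := by
      have hnum : Tendsto (fun ε : ℝ => - Real.log (1 + ε) - Real.log (1 - Real.sqrt ε))
          (𝓝[>] 0) (𝓝 0) := by
        have := (hlog1pε.neg).sub hlog1mε
        simpa using this
      have hden : Tendsto (fun ε : ℝ => Real.sqrt (Real.log 2 - Real.log (1 + ε)))
          (𝓝[>] 0) (𝓝 (Real.sqrt (Real.log 2))) := by
        have h1 : Tendsto (fun ε : ℝ => Real.log 2 - Real.log (1 + ε)) (𝓝[>] 0)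
            (𝓝 (Real.log 2)) := by
          have := (tendsto_const_nhds (α := ℝ) (x := Real.log 2)
            (f := 𝓝[>] (0:ℝ))).sub hlog1pε
          simpa using this
        exact h1.sqrt
      have := hnum.div hden (by positivity)
      simpa [Pi.div_def] using this
    have := hterm1.add hterm2
    simpa using this
  -- final squeeze
  have hmem : Set.Ioo (0:ℝ) δ ∈ 𝓝[>] (0:ℝ) := Ioo_mem_nhdsGT_of_mem ⟨le_refl 0, hδ0⟩
  have hAB : Tendsto (fun ε => A ε - B ε) (𝓝[>] 0) (𝓝 0) := by
    have := hA.sub hB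
    simpa using this
  apply tendsto_of_tendsto_of_tendsto_of_le_of_le' hAB hA
  · filter_upwards [hmem] with ε hε
    rw [key ε hε]
    have h1 := hDB ε hε
    linarith
  · filter_upwards [hmem] with ε hε
    rw [key ε hε]
    have h1 := hD0 ε hε
    linarith
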